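/- arXiv:0809.3061 — 2 statements merged into one kernel-verified Lean document; each statement's English description precedes it below -/
import Mathlib

section
/- For every z on the unit circle 𝕋 one has |R′(z)| > 1; in particular R′ has no zeros on 𝕋, so the restriction of R to 𝕋 is an expanding map without branch points. -/
/-!
On the unit circle `conj z = z⁻¹`, so `1 - conj a * z = z * conj (z - a)`. Hence every factor
`(z - a) / (1 - conj a * z)` has modulus one there, and its logarithmic derivative is
`(1 - ‖a‖²) / (z ‖z - a‖²)`, i.e. the Poisson kernel divided by `z`. Summing over the factors,
`z R'(z) = R(z) (1 + ∑ₖ Pₖ(z))` with every `Pₖ(z) > 0`, so `‖R'(z)‖ = 1 + ∑ₖ Pₖ(z) > 1`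
as soon as there is at least one factor besides `z`.
-/

open Finset ComplexConjugate

theorem poissonKernel_pos {c w z : ℂ} (h : ‖w - c‖ < ‖z - c‖) : 0 < poissonKernel c w z := by
  have hne : z - c - (w - c) ≠ 0 := sub_ne_zero.2 fun heq => h.ne (by rw [heq])
  exact div_pos (sub_pos.2 (pow_lt_pow_left₀ h (norm_nonneg _) two_ne_zero))
    (pow_pos (norm_pos_iff.2 hne) 2)

theorem HasDerivAt.fun_finsetProd_of_logDeriv {𝕜 𝔸 ι : Type*} [NontriviallyNormedField 𝕜]
    [NormedCommRing 𝔸] [NormedAlgebra 𝕜 𝔸] {s : Finset ι} {f : ι → 𝕜 → 𝔸} {c : ι → 𝔸} {x : 𝕜}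
    (hf : ∀ i ∈ s, HasDerivAt (f i) (f i x * c i) x) :
    HasDerivAt (∏ i ∈ s, f i ·) ((∏ i ∈ s, f i x) * ∑ i ∈ s, c i) x := by
  classical
  convert HasDerivAt.fun_finsetProd hf using 1
  rw [mul_sum]
  refine sum_congr rfl fun i hi => ?_
  rw [smul_eq_mul, ← mul_assoc, prod_erase_mul s _ hi]

namespace Complex

noncomputable def blaschkeFactor (a z : ℂ) : ℂ := (z - a) / (1 - conj a * z)

variable {a z : ℂ}

theorem one_sub_conj_mul_eq_mul_conj_sub (hz : ‖z‖ = 1) :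
    1 - conj a * z = z * conj (z - a) := by
  have hzz : z * conj z = 1 := by rw [mul_conj', hz]; norm_num
  rw [map_sub, mul_sub, hzz]
  ring

theorem norm_blaschkeFactor (hz : ‖z‖ = 1) (hza : z ≠ a) : ‖blaschkeFactor a z‖ = 1 := by
  rw [blaschkeFactor, one_sub_conj_mul_eq_mul_conj_sub hz, norm_div, norm_mul, norm_conj, hz,
    one_mul, div_self (norm_ne_zero_iff.2 (sub_ne_zero.2 hza))]

theorem hasDerivAt_blaschkeFactor (h : 1 - conj a * z ≠ 0) :
    HasDerivAt (blaschkeFactor a) ((1 - conj a * a) / (1 - conj a * z) ^ 2) z := by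
  have hnum : HasDerivAt (fun w => w - a) 1 z := (hasDerivAt_id z).sub_const a
  have hden : HasDerivAt (fun w => 1 - conj a * w) (-conj a) z := by
    simpa using ((hasDerivAt_id z).const_mul (conj a)).const_sub 1
  exact (hnum.fun_div hden h).congr_deriv (by ring)

theorem hasDerivAt_blaschkeFactor_of_norm_eq_one (hz : ‖z‖ = 1) (hza : z ≠ a) :
    HasDerivAt (blaschkeFactor a) (blaschkeFactor a z * (poissonKernel 0 a z / z)) z := by
  have hz0 : z ≠ 0 := ne_zero_of_norm_ne_zero (by rw [hz]; exact one_ne_zero)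
  have hza' : z - a ≠ 0 := sub_ne_zero.2 hza
  have hconj : conj (z - a) ≠ 0 := (map_ne_zero _).2 hza'
  have hden := one_sub_conj_mul_eq_mul_conj_sub (a := a) hz
  convert hasDerivAt_blaschkeFactor (hden ▸ mul_ne_zero hz0 hconj) using 1
  rw [blaschkeFactor, poissonKernel, sub_zero, sub_zero, hz, one_pow, hden, conj_mul']
  push_cast
  rw [← mul_conj' (z - a)]
  field_simp

theorem hasDerivAt_mul_prod_blaschkeFactor {ι : Type*} {s : Finset ι} {a : ι → ℂ} (lam : ℂ)
    (hz : ‖z‖ = 1) (ha : ∀ k ∈ s, z ≠ a k) :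
    HasDerivAt (fun w => lam * w * ∏ k ∈ s, blaschkeFactor (a k) w)
      (lam * (∏ k ∈ s, blaschkeFactor (a k) z) *
        ((1 + ∑ k ∈ s, poissonKernel 0 (a k) z : ℝ) : ℂ)) z := by
  have hz0 : z ≠ 0 := ne_zero_of_norm_ne_zero (by rw [hz]; exact one_ne_zero)
  have hprod := HasDerivAt.fun_finsetProd_of_logDeriv fun k hk =>
    hasDerivAt_blaschkeFactor_of_norm_eq_one hz (ha k hk)
  refine (((hasDerivAt_id z).const_mul lam).mul hprod).congr_deriv ?_
  rw [← sum_div, id_eq]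
  push_cast
  field_simp

end Complex

/-- For a finite Blaschke product of degree `n ≥ 2` with `R(0) = 0`,
for every `z` on the unit circle one has `|R'(z)| > 1`; in particular `R'` has no zeros
on the circle, so `R` restricted to the circle is expanding and has no branch points. -/
theorem blaschke_deriv_expanding_on_circle
    (n : ℕ) (hn : 2 ≤ n) (zs : ℕ → ℂ)
    (hzs : ∀ k ∈ Finset.Ico 1 n, ‖zs k‖ < 1)
    (lam : ℂ) (hlam : ‖lam‖ = 1) (R : ℂ → ℂ)
    (hR : ∀ z : ℂ, R z = lam * z * ∏ k ∈ Finset.Ico 1 n,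
      (z - zs k) / (1 - (starRingEnd ℂ) (zs k) * z)) :
    ∀ z : ℂ, ‖z‖ = 1 → 1 < ‖deriv R z‖ ∧ deriv R z ≠ 0 := by
  intro z hz
  have hza : ∀ k ∈ Ico 1 n, z ≠ zs k := fun k hk =>
    ne_of_apply_ne norm (by rw [hz]; exact (hzs k hk).ne')
  have hRfun : R = fun w => lam * w * ∏ k ∈ Ico 1 n, Complex.blaschkeFactor (zs k) w := funext hR
  have hsum : 0 < ∑ k ∈ Ico 1 n, poissonKernel 0 (zs k) z :=
    sum_pos (fun k hk => poissonKernel_pos (by simpa [hz] using hzs k hk))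
      ⟨1, mem_Ico.2 ⟨le_rfl, hn⟩⟩
  have hnorm : ‖deriv R z‖ = 1 + ∑ k ∈ Ico 1 n, poissonKernel 0 (zs k) z := by
    rw [hRfun, (Complex.hasDerivAt_mul_prod_blaschkeFactor lam hz hza).deriv, norm_mul, norm_mul,
      hlam, norm_prod, prod_eq_one fun k hk => Complex.norm_blaschkeFactor hz (hza k hk),
      Complex.norm_real, Real.norm_of_nonneg (by linarith), one_mul, one_mul]
  exact ⟨by linarith, norm_ne_zero_iff.1 (by linarith)⟩
end

section
/- Fix w ∈ 𝕋 and let α_1, …, α_n be the n distinct solutions in 𝕋 of R(z) = w, and set λ_k = R(α_k)/(α_k R′(α_k)). Then for every z ∈ ℂ that is not one of the α_k, not 0, and not a pole of R, one has (R(z)/z)/(R(z) − w) = Σ_{k=1}^{n} λ_k/(z − α_k); moreover Σ_{k=1}^{n} λ_k = 1. -/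
/-!
Write `R = P / Q` with `P = λ X ∏ (X - z_k)` and `Q = ∏ (1 - conj z_k X)`. As `deg Q < n` while
`P` is `λ` times a monic polynomial of degree `n`, the polynomial `P - w Q` vanishing at the `n`
distinct points `α_k` must be `λ N` with `N = ∏ (X - α_k)`. Hence `(R(z)/z)/(R(z) - w) = A(z)/N(z)`
with `A = ∏ (X - z_k)` monic of degree `n - 1`, and `λ_k = A(α_k)/N'(α_k)` since at a root of
`P - w Q` the quotient rule gives `R' = (P - w Q)'/Q`. Lagrange interpolation of `A` at the nodes
`α_k` is the partial fraction expansion of `A/N`, and its residues sum to the coefficient of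
`X^(n-1)` in `A`, which is `1`.
-/

open Polynomial Finset

namespace Lagrange

variable {F ι : Type*} [Field F] {s : Finset ι} {v : ι → F}

theorem eq_nodal_of_monic (hvs : Set.InjOn v s) {p : F[X]} (hp : p.Monic)
    (hdeg : p.natDegree = #s) (hroot : ∀ i ∈ s, p.eval (v i) = 0) : p = nodal s v := by
  refine eq_of_degree_sub_lt_of_eval_index_eq s hvs ?_ fun i hi => by
    rw [hroot i hi, eval_nodal_at_node hi]
  have hdeg' : p.degree = (nodal s v).degree := by
    rw [degree_nodal, degree_eq_natDegree hp.ne_zero, hdeg]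
  calc (p - nodal s v).degree < p.degree :=
        degree_sub_lt_left hdeg' hp.ne_zero (by rw [hp.leadingCoeff, nodal_monic.leadingCoeff])
    _ = #s := by rw [hdeg', degree_nodal]

variable [DecidableEq ι]

theorem eval_div_nodal_eq_sum (hvs : Set.InjOn v s) {p : F[X]} (hp : p.degree < #s) {z : F}
    (hz : ∀ i ∈ s, z ≠ v i) :
    p.eval z / (nodal s v).eval z
      = ∑ i ∈ s, p.eval (v i) / (nodal s v).derivative.eval (v i) / (z - v i) := by
  have hN : (nodal s v).eval z ≠ 0 := eval_nodal_not_at_node hz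
  rw [div_eq_iff hN]
  nth_rewrite 1 [eq_interpolate hvs hp]
  rw [eval_interpolate_not_at_node _ hz, mul_comm]
  congr 1
  refine Finset.sum_congr rfl fun i hi => ?_
  rw [nodalWeight_eq_eval_derivative_nodal hi]
  ring

theorem sum_eval_div_derivative_nodal (hvs : Set.InjOn v s) {p : F[X]} (hp : #s = p.degree + 1) :
    ∑ i ∈ s, p.eval (v i) / (nodal s v).derivative.eval (v i) = p.leadingCoeff := by
  rw [leadingCoeff_eq_sum hvs hp]
  refine Finset.sum_congr rfl fun i hi => ?_
  rw [eval_nodal_derivative_eval_node_eq hi, eval_nodal]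

end Lagrange

theorem deriv_eval_div_eval_of_eval_eq {𝕜 : Type*} [NontriviallyNormedField 𝕜] {P Q : 𝕜[X]}
    {a w : 𝕜} (hQ : Q.eval a ≠ 0) (hPQ : P.eval a = w * Q.eval a) :
    deriv (fun z => P.eval z / Q.eval z) a = (P - C w * Q).derivative.eval a / Q.eval a := by
  rw [deriv_fun_div P.differentiableAt Q.differentiableAt hQ, Polynomial.deriv, Polynomial.deriv,
    hPQ, derivative_sub, derivative_C_mul, eval_sub, eval_mul, eval_C]
  field_simp

open Lagrange ComplexConjugate

section Blaschke

variable {ι : Type*} (s : Finset ι) (a : ι → ℂ) (lam : ℂ)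

noncomputable def blaschke (z : ℂ) : ℂ :=
  lam * z * ∏ k ∈ s, (z - a k) / (1 - conj (a k) * z)

noncomputable def blaschkeDen : ℂ[X] :=
  ∏ k ∈ s, (1 - C (conj (a k)) * X)

variable {s a lam}

theorem eval_blaschkeDen (z : ℂ) :
    (blaschkeDen s a).eval z = ∏ k ∈ s, (1 - conj (a k) * z) := by
  simp [blaschkeDen, eval_prod]

theorem blaschke_eq_eval_div_eval :
    blaschke s a lam =
      fun z => (C lam * X * nodal s a).eval z / (blaschkeDen s a).eval z := by
  funext z
  rw [blaschke, prod_div_distrib, eval_blaschkeDen, eval_mul, eval_mul, eval_C, eval_X,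
    eval_nodal, mul_div_assoc]

theorem one_sub_conj_mul_ne_zero {b z : ℂ} (hb : ‖b‖ < 1) (hz : ‖z‖ ≤ 1) : 1 - conj b * z ≠ 0 := by
  intro h
  have : ‖conj b * z‖ < 1 := by
    rw [norm_mul, RCLike.norm_conj]
    nlinarith [norm_nonneg b, norm_nonneg z]
  rw [← sub_eq_zero.mp h, norm_one] at this
  exact this.false

theorem eval_blaschkeDen_ne_zero {z : ℂ} (hz : ∀ k ∈ s, 1 - conj (a k) * z ≠ 0) :
    (blaschkeDen s a).eval z ≠ 0 := by
  rw [eval_blaschkeDen]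
  exact prod_ne_zero_iff.mpr hz

theorem natDegree_blaschkeDen_le : (blaschkeDen s a).natDegree ≤ #s := by
  refine (natDegree_prod_le _ _).trans ?_
  rw [card_eq_sum_ones]
  exact sum_le_sum fun k _ => (natDegree_sub_le _ _).trans
    (max_le (by simp) ((natDegree_C_mul_le _ _).trans natDegree_X_le))

theorem C_mul_X_mul_nodal_sub_C_mul_blaschkeDen {κ : Type*} {t : Finset κ} {α : κ → ℂ} {w : ℂ}
    (hlam : lam ≠ 0) (hα : Set.InjOn α t) (hcard : #t = #s + 1)
    (hden : ∀ i ∈ t, (blaschkeDen s a).eval (α i) ≠ 0)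
    (hroot : ∀ i ∈ t, blaschke s a lam (α i) = w) :
    C lam * X * nodal s a - C w * blaschkeDen s a = C lam * nodal t α := by
  have hXnodal : (X * nodal s a).Monic := monic_X.mul nodal_monic
  have hdeg : (X * nodal s a).natDegree = #t := by
    rw [natDegree_mul X_ne_zero nodal_ne_zero, natDegree_X, natDegree_nodal,
      hcard, add_comm]
  have hlow : (C (w / lam) * blaschkeDen s a).natDegree < (X * nodal s a).natDegree :=
    (natDegree_C_mul_le _ _).trans_lt <| natDegree_blaschkeDen_le.trans_lt (by omega)
  have hmonic : X * nodal s a - C (w / lam) * blaschkeDen s a = nodal t α := by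
    refine eq_nodal_of_monic hα (hXnodal.sub_of_left (degree_lt_degree hlow)) ?_
      fun i hi => ?_
    · rwa [natDegree_sub_eq_left_of_natDegree_lt hlow]
    · have h := hroot i hi
      rw [blaschke_eq_eval_div_eval, div_eq_iff (hden i hi)] at h
      simp only [eval_sub, eval_mul, eval_C, eval_X] at h ⊢
      field_simp
      linear_combination h
  rw [← hmonic, mul_sub, ← mul_assoc, ← mul_assoc, ← C_mul, mul_div_cancel₀ _ hlam]

variable {w z : ℂ} {N : ℂ[X]}

theorem blaschke_div_self_div_sub_eq
    (hfac : C lam * X * nodal s a - C w * blaschkeDen s a = C lam * N)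
    (hlam : lam ≠ 0) (hz : z ≠ 0) (hden : (blaschkeDen s a).eval z ≠ 0) :
    blaschke s a lam z / z / (blaschke s a lam z - w)
      = (nodal s a).eval z / N.eval z := by
  have hfac_z := congrArg (eval z) hfac
  simp only [eval_sub, eval_mul, eval_C, eval_X] at hfac_z
  have hdiv :
      blaschke s a lam z / z = lam * (nodal s a).eval z / (blaschkeDen s a).eval z := by
    rw [blaschke_eq_eval_div_eval]
    simp only [eval_mul, eval_C, eval_X]
    field_simp
  have hsub : blaschke s a lam z - w = lam * N.eval z / (blaschkeDen s a).eval z := by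
    rw [blaschke_eq_eval_div_eval, ← hfac_z]
    simp only [eval_mul, eval_C, eval_X]
    field_simp
  rw [hdiv, hsub, div_div_div_cancel_right₀ hden, mul_div_mul_left _ _ hlam]

theorem blaschke_div_mul_deriv_eq
    (hfac : C lam * X * nodal s a - C w * blaschkeDen s a = C lam * N)
    (hlam : lam ≠ 0) (hz : z ≠ 0) (hden : (blaschkeDen s a).eval z ≠ 0) (hN : N.eval z = 0) :
    blaschke s a lam z / (z * deriv (blaschke s a lam) z)
      = (nodal s a).eval z / N.derivative.eval z := by
  have hroot : (C lam * X * nodal s a).eval z = w * (blaschkeDen s a).eval z := by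
    have h := congrArg (eval z) hfac
    simp only [eval_sub, eval_mul, eval_C, eval_X, hN, mul_zero, sub_eq_zero] at h ⊢
    exact h
  rw [blaschke_eq_eval_div_eval, deriv_eval_div_eval_of_eval_eq hden hroot, hfac,
    derivative_C_mul, eval_mul, eval_C, mul_div_assoc', div_div_div_cancel_right₀ hden]
  simp only [eval_mul, eval_C, eval_X]
  rw [show z * (lam * N.derivative.eval z) = lam * z * N.derivative.eval z by ring,
    mul_div_mul_left _ _ (mul_ne_zero hlam hz)]

end Blaschke

theorem blaschke_partial_fractions_general
    (n : ℕ) (hn : 2 ≤ n) (zs : ℕ → ℂ)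
    (hzs : ∀ k ∈ Finset.Ico 1 n, ‖zs k‖ < 1)
    (lam : ℂ) (hlam : ‖lam‖ = 1) (R : ℂ → ℂ)
    (hR : ∀ z : ℂ, R z = lam * z * ∏ k ∈ Finset.Ico 1 n,
      (z - zs k) / (1 - (starRingEnd ℂ) (zs k) * z))
    (w : ℂ)
    (α : Fin n → ℂ) (hinj : Function.Injective α)
    (hαT : ∀ k, ‖α k‖ = 1) (hαR : ∀ k, R (α k) = w) :
    (∀ z : ℂ, z ≠ 0 → (∀ k, z ≠ α k) →
        (∀ j ∈ Finset.Ico 1 n, 1 - (starRingEnd ℂ) (zs j) * z ≠ 0) →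
        (R z / z) / (R z - w)
          = ∑ k : Fin n, R (α k) / (α k * deriv R (α k)) / (z - α k))
      ∧ ∑ k : Fin n, R (α k) / (α k * deriv R (α k)) = 1 := by
  obtain rfl : R = blaschke (Ico 1 n) zs lam := funext hR
  have hlam0 : lam ≠ 0 := norm_ne_zero_iff.mp (hlam ▸ one_ne_zero)
  have hα0 : ∀ k, α k ≠ 0 := fun k => norm_ne_zero_iff.mp ((hαT k) ▸ one_ne_zero)
  have hden : ∀ k, (blaschkeDen (Ico 1 n) zs).eval (α k) ≠ 0 := fun k =>
    eval_blaschkeDen_ne_zero fun j hj => one_sub_conj_mul_ne_zero (hzs j hj) (hαT k).le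
  have hcard : #(univ : Finset (Fin n)) = #(Ico 1 n) + 1 := by
    rw [card_univ, Fintype.card_fin, Nat.card_Ico]
    omega
  have hdeg : #(univ : Finset (Fin n)) = (nodal (Ico 1 n) zs).degree + 1 := by
    rw [degree_nodal, hcard]
    norm_cast
  have hfac := C_mul_X_mul_nodal_sub_C_mul_blaschkeDen hlam0 hinj.injOn hcard
    (fun k _ => hden k) (fun k _ => hαR k)
  have hweight : ∀ k, blaschke (Ico 1 n) zs lam (α k) /
      (α k * deriv (blaschke (Ico 1 n) zs lam) (α k))
        = (nodal (Ico 1 n) zs).eval (α k) / (nodal univ α).derivative.eval (α k) := fun k =>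
    blaschke_div_mul_deriv_eq hfac hlam0 (hα0 k) (hden k) (eval_nodal_at_node (mem_univ k))
  simp only [hweight]
  refine ⟨fun z hz0 hzα hzpole => ?_, ?_⟩
  · rw [blaschke_div_self_div_sub_eq hfac hlam0 hz0 (eval_blaschkeDen_ne_zero hzpole),
      eval_div_nodal_eq_sum hinj.injOn (by rw [degree_nodal, hcard]; exact_mod_cast lt_add_one _)
        fun k _ => hzα k]
  · rw [sum_eval_div_derivative_nodal hinj.injOn hdeg, nodal_monic.leadingCoeff]

/-- Fix `w` on the unit circle and let `α 1, …, α n` be the `n` distinct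
solutions on the circle of `R(z) = w`; set `λ_k = R(α_k)/(α_k R'(α_k))`. Then for every
`z ∈ ℂ` that is not one of the `α_k`, not `0`, and not a pole of `R`, one has
`(R(z)/z)/(R(z) − w) = ∑_k λ_k/(z − α_k)`; moreover `∑_k λ_k = 1`. -/
theorem blaschke_partial_fractions
    (n : ℕ) (hn : 2 ≤ n) (zs : ℕ → ℂ)
    (hzs : ∀ k ∈ Finset.Ico 1 n, ‖zs k‖ < 1)
    (lam : ℂ) (hlam : ‖lam‖ = 1) (R : ℂ → ℂ)
    (hR : ∀ z : ℂ, R z = lam * z * ∏ k ∈ Finset.Ico 1 n,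
      (z - zs k) / (1 - (starRingEnd ℂ) (zs k) * z))
    (w : ℂ) (hw : ‖w‖ = 1)
    (α : Fin n → ℂ) (hinj : Function.Injective α)
    (hαT : ∀ k, ‖α k‖ = 1) (hαR : ∀ k, R (α k) = w) :
    (∀ z : ℂ, z ≠ 0 → (∀ k, z ≠ α k) →
        (∀ j ∈ Finset.Ico 1 n, 1 - (starRingEnd ℂ) (zs j) * z ≠ 0) →
        (R z / z) / (R z - w)
          = ∑ k : Fin n, R (α k) / (α k * deriv R (α k)) / (z - α k))
      ∧ ∑ k : Fin n, R (α k) / (α k * deriv R (α k)) = 1 :=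
  blaschke_partial_fractions_general n hn zs hzs lam hlam R hR w α hinj hαT hαR
end
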